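/- arXiv:1101.5876 — 2 statements merged into one kernel-verified Lean document; each statement's English description precedes it below -/
import Mathlib

section
/- Let G be a connected graph coloured with two colours, where a move consists of choosing a vertex v and contracting all edges incident with the monochromatic component of v (i.e. flipping its colour, merging it with all neighbouring components). Then there exists an optimal (minimum-length) sequence of moves reducing G to a single monochromatic vertex in which every move is played at the same vertex. -/
namespace Flood

variable {V C : Type*}

/-- Two vertices are joined by an edge inside a monochromatic class. -/
def monoAdj (G : SimpleGraph V) (ω : V → C) (a b : V) : Prop :=
  G.Adj a b ∧ ω a = ω b

/-- `u` and `v` lie in a common monochromatic component of the colouring `ω`. -/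
def monoLinked (G : SimpleGraph V) (ω : V → C) (u v : V) : Prop :=
  Relation.ReflTransGen (monoAdj G ω) u v

/-- One flooding move: recolour the monochromatic component of `v` with colour `d`. -/
noncomputable def floodMove (G : SimpleGraph V) (ω : V → C) (v : V) (d : C) : V → C :=
  fun u => @ite _ (monoLinked G ω v u) (Classical.propDecidable _) d (ω u)

/-- Apply a sequence of flooding moves. -/
noncomputable def floodSeq (G : SimpleGraph V) (ω : V → C) (S : List (V × C)) : V → C :=
  S.foldl (fun ω' m => floodMove G ω' m.1 m.2) ω

/-- The sequence `S` floods `G`, i.e. makes it monochromatic. -/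
def Floods (G : SimpleGraph V) (ω : V → C) (S : List (V × C)) : Prop :=
  ∀ a b, floodSeq G ω S a = floodSeq G ω S b

/-- Minimum number of moves needed to make `G` monochromatic. -/
noncomputable def floodCost (G : SimpleGraph V) (ω : V → C) : ℕ :=
  sInf {k | ∃ S, S.length = k ∧ Floods G ω S}

/-- Minimum number of moves needed to make `G` monochromatic in colour `d`. -/
noncomputable def floodCostIn (G : SimpleGraph V) (ω : V → C) (d : C) : ℕ :=
  sInf {k | ∃ S, S.length = k ∧ ∀ a, floodSeq G ω S a = d}

/-- The sequence `S` links `u` and `v`. -/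
def Links (G : SimpleGraph V) (ω : V → C) (S : List (V × C)) (u v : V) : Prop :=
  monoLinked G (floodSeq G ω S) u v

/-- Minimum number of moves needed to link `u` and `v`. -/
noncomputable def linkCost (G : SimpleGraph V) (ω : V → C) (u v : V) : ℕ :=
  sInf {k | ∃ S, S.length = k ∧ Links G ω S u v}

/-- Minimum number of moves needed to link `u` and `v` in a monochromatic
component of colour `d`. -/
noncomputable def linkCostIn (G : SimpleGraph V) (ω : V → C) (u v : V) (d : C) : ℕ :=
  sInf {k | ∃ S, S.length = k ∧ Links G ω S u v ∧ floodSeq G ω S u = d}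


/-- In the two-colour game a move at a vertex flips the colour of its
monochromatic component (thereby merging it with all neighbouring components). -/
noncomputable def flipSeq (G : SimpleGraph V) (ω : V → Bool) (S : List V) : V → Bool :=
  S.foldl (fun ω' x => floodMove G ω' x (!ω' x)) ω

end Flood

/-!
Contract every monochromatic component to a single node. Playing `s` times at a fixed vertex `w`
merges exactly the ball of radius `s` about `w` in the contracted graph, so `s` moves at `w` flood
the graph iff that ball contains every vertex not already of the final colour. A single move at `x`
contracts the closed neighbourhood of the node of `x`, and this shrinks such covering radii by at
most one: if `t` moves at `w` flood after the move at `x`, then `t + 1` moves flood before it,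
played at `x` if the move absorbed `w`, and otherwise at the vertex where a shortest route from `w`
to `x` leaves the component of `w`. By induction, every flooding sequence is at least as long as
some flooding sequence played at one vertex.
-/

namespace Flood

variable {V C : Type*} {G : SimpleGraph V}

section MonoLinked

variable {σ τ : V → C}

theorem monoLinked.refl (u : V) : monoLinked G σ u u := Relation.ReflTransGen.refl

theorem monoLinked.trans {a b c : V} (hab : monoLinked G σ a b) (hbc : monoLinked G σ b c) :
    monoLinked G σ a c :=
  Relation.ReflTransGen.trans hab hbc

theorem monoLinked.symm {a b : V} (h : monoLinked G σ a b) : monoLinked G σ b a := by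
  induction h with
  | refl => exact .refl _
  | tail _ hbc ih => exact Relation.ReflTransGen.head ⟨hbc.1.symm, hbc.2.symm⟩ ih

theorem monoLinked.colour_eq {a b : V} (h : monoLinked G σ a b) : σ a = σ b := by
  induction h with
  | refl => rfl
  | tail _ hbc ih => exact ih.trans hbc.2

theorem monoLinked.of_forall_eq {q u : V} {d : C} (h : monoLinked G σ q u)
    (hτ : ∀ z, monoLinked G σ q z → τ z = d) : monoLinked G τ q u := by
  induction h with
  | refl => exact .refl _
  | tail hqb hbc ih => exact ih.tail ⟨hbc.1, by rw [hτ _ hqb, hτ _ (hqb.tail hbc)]⟩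

theorem monoLinked.of_agree {u v : V} (h : monoLinked G τ u v)
    (hστ : ∀ z, monoLinked G τ u z → τ z = σ z) : monoLinked G σ u v := by
  induction h with
  | refl => exact .refl _
  | tail hub hbc ih =>
    exact ih.tail ⟨hbc.1, by rw [← hστ _ hub, ← hστ _ (hub.tail hbc), hbc.2]⟩

theorem floodMove_apply_of_monoLinked {y u : V} {d : C} (h : monoLinked G σ y u) :
    floodMove G σ y d u = d :=
  if_pos h

theorem floodMove_apply_of_not_monoLinked {y u : V} {d : C} (h : ¬ monoLinked G σ y u) :
    floodMove G σ y d u = σ u :=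
  if_neg h

theorem monoLinked.floodMove {y a b : V} {d : C} (h : monoLinked G σ a b) :
    monoLinked G (floodMove G σ y d) a b := by
  induction h with
  | refl => exact .refl _
  | @tail b c _ hbc ih =>
    refine ih.tail ⟨hbc.1, ?_⟩
    by_cases hb : monoLinked G σ y b
    · rw [floodMove_apply_of_monoLinked hb, floodMove_apply_of_monoLinked (hb.tail hbc)]
    · have hc : ¬ monoLinked G σ y c := fun hc => hb (hc.tail ⟨hbc.1.symm, hbc.2.symm⟩)
      rw [floodMove_apply_of_not_monoLinked hb, floodMove_apply_of_not_monoLinked hc, hbc.2]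

theorem monoLinked_of_monoLinked_floodMove {x u v : V} {d : C}
    (hu : ¬ monoLinked G (floodMove G σ x d) x u) (h : monoLinked G (floodMove G σ x d) u v) :
    monoLinked G σ u v :=
  h.of_agree fun _ hz => floodMove_apply_of_not_monoLinked fun hxz =>
    hu (hxz.floodMove.trans hz.symm)

end MonoLinked

/-- `ReachIn G σ s u v`: `v` lies within distance `s` of `u` once the monochromatic components
of `σ` are contracted to single vertices. -/
def ReachIn (G : SimpleGraph V) (σ : V → C) : ℕ → V → V → Prop
  | 0, u, v => monoLinked G σ u v
  | s + 1, u, v =>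
    ReachIn G σ s u v ∨ ∃ p q, ReachIn G σ s u p ∧ G.Adj p q ∧ monoLinked G σ q v

namespace ReachIn

variable {σ : V → C}

theorem mono {s s' : ℕ} {u v : V} (hs : s ≤ s') (h : ReachIn G σ s u v) :
    ReachIn G σ s' u v := by
  induction hs with
  | refl => exact h
  | step _ ih => exact Or.inl ih

theorem of_monoLinked {u v : V} (s : ℕ) (h : monoLinked G σ u v) : ReachIn G σ s u v :=
  mono (Nat.zero_le s) h

theorem refl (s : ℕ) (u : V) : ReachIn G σ s u u := of_monoLinked s (.refl u)

theorem step {s : ℕ} {u p q v : V} (h : ReachIn G σ s u p) (hpq : G.Adj p q)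
    (hqv : monoLinked G σ q v) : ReachIn G σ (s + 1) u v :=
  Or.inr ⟨p, q, h, hpq, hqv⟩

theorem trans_monoLinked : ∀ {s : ℕ} {u v v' : V},
    ReachIn G σ s u v → monoLinked G σ v v' → ReachIn G σ s u v'
  | 0, _, _, _, h, h' => monoLinked.trans h h'
  | _ + 1, _, _, _, Or.inl h, h' => Or.inl (trans_monoLinked h h')
  | _ + 1, _, _, _, Or.inr ⟨_, _, hp, hpq, hq⟩, h' => step hp hpq (hq.trans h')

theorem trans : ∀ {b a : ℕ} {u v z : V},
    ReachIn G σ a u v → ReachIn G σ b v z → ReachIn G σ (a + b) u z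
  | 0, _, _, _, _, h, h' => trans_monoLinked h h'
  | _ + 1, _, _, _, _, h, Or.inl h' => Or.inl (trans h h')
  | _ + 1, _, _, _, _, h, Or.inr ⟨_, _, hp, hpq, hq⟩ => step (trans h hp) hpq hq

theorem cons {s : ℕ} {u p q v : V} (hup : monoLinked G σ u p) (hpq : G.Adj p q)
    (h : ReachIn G σ s q v) : ReachIn G σ (s + 1) u v := by
  simpa only [Nat.add_comm] using (step (of_monoLinked 0 hup) hpq (.refl q)).trans h

theorem symm : ∀ {s : ℕ} {u v : V}, ReachIn G σ s u v → ReachIn G σ s v u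
  | 0, _, _, h => monoLinked.symm h
  | _ + 1, _, _, Or.inl h => Or.inl (symm h)
  | _ + 1, _, _, Or.inr ⟨_, _, hp, hpq, hq⟩ => cons hq.symm hpq.symm (symm hp)

theorem head_cases {s : ℕ} {u v : V} (h : ReachIn G σ (s + 1) u v) :
    ReachIn G σ s u v ∨ ∃ p q, monoLinked G σ u p ∧ G.Adj p q ∧ ReachIn G σ s q v := by
  rcases h.symm with h | ⟨p, q, hp, hpq, hq⟩
  · exact Or.inl h.symm
  · exact Or.inr ⟨q, p, hq.symm, hpq.symm, hp.symm⟩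

theorem floodMove {y : V} {d : C} : ∀ {s : ℕ} {u v : V},
    ReachIn G σ s u v → ReachIn G (Flood.floodMove G σ y d) s u v
  | 0, _, _, h => monoLinked.floodMove h
  | _ + 1, _, _, Or.inl h => Or.inl (floodMove h)
  | _ + 1, _, _, Or.inr ⟨_, _, hp, hpq, hq⟩ => step (floodMove hp) hpq hq.floodMove

end ReachIn

theorem monoLinked.trans_reachIn {σ : V → C} {s : ℕ} {u' u v : V} (h : monoLinked G σ u' u)
    (h' : ReachIn G σ s u v) : ReachIn G σ s u' v := by
  simpa using (ReachIn.of_monoLinked 0 h).trans h'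

theorem reachIn_of_walk {σ : V → C} {u v : V} (p : G.Walk u v) : ReachIn G σ p.length u v := by
  induction p with
  | nil => exact .refl 0 _
  | cons huv _ ih => exact .cons (.refl _) huv ih

theorem reachIn_succ_or_forall_monoLinked {τ : V → C} {t : ℕ} {w : V} {c : C}
    (hG : G.Connected) (H : ∀ u, ReachIn G τ t w u ∨ τ u = c) (x : V) :
    ReachIn G τ (t + 1) w x ∨ ∀ u, monoLinked G τ x u := by
  by_cases hx : ReachIn G τ t w x
  · exact Or.inl (hx.mono t.le_succ)
  have hτx : τ x = c := (H x).resolve_left hx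
  refine or_iff_not_imp_right.2 fun hall => ?_
  obtain ⟨u, hu⟩ := not_forall.1 hall
  -- the component of `x` has colour `c`, so an edge leaving it ends inside the ball
  obtain ⟨⟨⟨z, z'⟩, hzz'⟩, -, hz, hz'⟩ :=
    (hG.preconnected x u).some.exists_boundary_dart {z | monoLinked G τ x z} (.refl x) hu
  have hz'c : τ z' ≠ c := fun h => hz' (hz.tail ⟨hzz', by rw [← hz.colour_eq, hτx, h]⟩)
  exact ((H z').resolve_right hz'c).step hzz'.symm hz.symm

section Move

variable {σ : V → C} {x : V} {d : C}

theorem reachIn_one_of_monoLinked_floodMove {u : V}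
    (h : monoLinked G (floodMove G σ x d) x u) : ReachIn G σ 1 x u := by
  induction h with
  | refl => exact .refl 1 x
  | @tail b c _ hbc ih =>
    by_cases hc : monoLinked G σ x c
    · exact .of_monoLinked 1 hc
    by_cases hb : monoLinked G σ x b
    · exact .step (.of_monoLinked 0 hb) hbc.1 (.refl c)
    have hσ : σ b = σ c := by
      rw [← floodMove_apply_of_not_monoLinked (d := d) hb,
        ← floodMove_apply_of_not_monoLinked (d := d) hc, hbc.2]
    exact ih.trans_monoLinked (.single ⟨hbc.1, hσ⟩)

theorem reachIn_succ_of_reachIn_floodMove :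
    ∀ {s : ℕ} {u : V}, ReachIn G (floodMove G σ x d) s x u → ReachIn G σ (s + 1) x u
  | 0, _, h => reachIn_one_of_monoLinked_floodMove h
  | _ + 1, _, Or.inl h => Or.inl (reachIn_succ_of_reachIn_floodMove h)
  | _ + 1, _, Or.inr ⟨_, q, hp, hpq, hqu⟩ => by
    by_cases hq : monoLinked G (floodMove G σ x d) x q
    · exact (reachIn_one_of_monoLinked_floodMove (hq.trans hqu)).mono (by omega)
    · exact .step (reachIn_succ_of_reachIn_floodMove hp) hpq
        (monoLinked_of_monoLinked_floodMove hq hqu)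

theorem ReachIn.cases_of_floodMove : ∀ {s : ℕ} {u v : V},
    ReachIn G (Flood.floodMove G σ x d) s u v → ReachIn G σ s u v ∨
      ∃ a b, a + b ≤ s ∧ ReachIn G (Flood.floodMove G σ x d) a u x ∧
        ReachIn G (Flood.floodMove G σ x d) b x v
  | 0, u, _, h => by
    by_cases hu : monoLinked G (Flood.floodMove G σ x d) x u
    · exact Or.inr ⟨0, 0, le_rfl, hu.symm, hu.trans h⟩
    · exact Or.inl (monoLinked_of_monoLinked_floodMove hu h)
  | _ + 1, _, _, Or.inl h =>
    (cases_of_floodMove h).imp Or.inl fun ⟨a, b, hab, hux, hxv⟩ =>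
      ⟨a, b, by omega, hux, hxv⟩
  | s + 1, _, _, Or.inr ⟨_, q, hp, hpq, hqv⟩ => by
    rcases cases_of_floodMove hp with hp | ⟨a, b, hab, hux, hxp⟩
    · by_cases hq : monoLinked G (Flood.floodMove G σ x d) x q
      · exact Or.inr ⟨s + 1, 0, le_rfl, hp.floodMove.step hpq hq.symm, hq.trans hqv⟩
      · exact Or.inl (hp.step hpq (monoLinked_of_monoLinked_floodMove hq hqv))
    · exact Or.inr ⟨a, b + 1, by omega, hux, hxp.step hpq hqv⟩

end Move

structure FloodedBall (G : SimpleGraph V) (σ : V → C) (w : V) (s : ℕ) (c : C) (A : V → C) :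
    Prop where
  apply_of_reachIn : ∀ u, ReachIn G σ s w u → A u = c
  apply_of_not_reachIn : ∀ u, ¬ ReachIn G σ s w u → A u = σ u
  monoLinked_iff : ∀ u, monoLinked G A w u ↔ ReachIn G σ s w u

namespace FloodedBall

theorem zero (σ : V → C) (w : V) : FloodedBall G σ w 0 (σ w) σ where
  apply_of_reachIn _ h := (monoLinked.colour_eq h).symm
  apply_of_not_reachIn _ _ := rfl
  monoLinked_iff _ := Iff.rfl

variable {σ A : V → Bool} {w : V} {s : ℕ} {c : Bool}

theorem apply_self (h : FloodedBall G σ w s c A) : A w = c :=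
  h.apply_of_reachIn w (.refl s w)

theorem apply_eq_not_of_reachIn_succ (h : FloodedBall G σ w s c A) {u : V}
    (hu : ReachIn G σ (s + 1) w u) (hu' : ¬ ReachIn G σ s w u) : σ u = !c := by
  rcases hu with hu | ⟨p, q, hp, hpq, hqu⟩
  · exact absurd hu hu'
  have hq : ¬ ReachIn G σ s w q := fun hq => hu' (hq.trans_monoLinked hqu)
  have hσq : σ q ≠ c := fun hσq => hq <| (h.monoLinked_iff q).1 <|
    ((h.monoLinked_iff p).2 hp).tail
      ⟨hpq, by rw [h.apply_of_reachIn p hp, h.apply_of_not_reachIn q hq, hσq]⟩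
  rw [← hqu.colour_eq, Bool.eq_not_iff.2 hσq]

theorem floodMove (h : FloodedBall G σ w s c A) :
    FloodedBall G σ w (s + 1) (!c) (Flood.floodMove G A w (!c)) := by
  have hout : ∀ u, ¬ ReachIn G σ s w u → Flood.floodMove G A w (!c) u = σ u := fun u hu => by
    rw [floodMove_apply_of_not_monoLinked (mt (h.monoLinked_iff u).1 hu),
      h.apply_of_not_reachIn u hu]
  have hin : ∀ u, ReachIn G σ (s + 1) w u → Flood.floodMove G A w (!c) u = !c := fun u hu => by
    by_cases hs : ReachIn G σ s w u
    · exact floodMove_apply_of_monoLinked ((h.monoLinked_iff u).2 hs)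
    · rw [hout u hs, h.apply_eq_not_of_reachIn_succ hu hs]
  refine ⟨hin, fun u hu => hout u (mt (ReachIn.mono s.le_succ) hu),
    fun u => ⟨fun hwu => ?_, ?_⟩⟩
  · induction hwu with
    | refl => exact .refl _ _
    | @tail a b _ hab ih =>
      by_cases ha : ReachIn G σ s w a
      · exact ha.step hab.1 (.refl b)
      by_cases hb : ReachIn G σ s w b
      · exact hb.mono s.le_succ
      exact ih.trans_monoLinked (.single ⟨hab.1, by rw [← hout a ha, ← hout b hb, hab.2]⟩)
  · rintro (hu | ⟨p, q, hp, hpq, hqu⟩)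
    · exact ((h.monoLinked_iff u).2 hu).floodMove
    have hwp := ((h.monoLinked_iff p).2 hp).floodMove (y := w) (d := !c)
    have hpq' : monoAdj G (Flood.floodMove G A w (!c)) p q :=
      ⟨hpq, by rw [hin p (hp.mono s.le_succ), hin q (hp.step hpq (.refl q))]⟩
    exact (hwp.tail hpq').trans (hqu.of_forall_eq fun z hz => hin z (hp.step hpq hz))

end FloodedBall

section SingleVertex

variable {σ : V → Bool}

theorem flipSeq_replicate_succ (σ : V → Bool) (w : V) (s : ℕ) :
    flipSeq G σ (List.replicate (s + 1) w) =
      floodMove G (flipSeq G σ (List.replicate s w)) w (!flipSeq G σ (List.replicate s w) w) := by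
  rw [List.replicate_succ', flipSeq, List.foldl_append]
  rfl

theorem floodedBall_flipSeq_replicate (σ : V → Bool) (w : V) :
    ∀ s, FloodedBall G σ w s (not^[s] (σ w)) (flipSeq G σ (List.replicate s w))
  | 0 => .zero σ w
  | s + 1 => by
    have h := floodedBall_flipSeq_replicate σ w s
    rw [flipSeq_replicate_succ, h.apply_self, Function.iterate_succ_apply']
    exact h.floodMove

/-- `not^[s] (σ w)` is the colour of the ball of radius `s` about `w` after `s` moves at `w`. -/
def BallCovers (G : SimpleGraph V) (σ : V → Bool) (s : ℕ) (w : V) : Prop :=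
  ∀ u, ReachIn G σ s w u ∨ σ u = not^[s] (σ w)

theorem flipSeq_replicate_floods_iff (σ : V → Bool) (w : V) (s : ℕ) :
    (∀ a b, flipSeq G σ (List.replicate s w) a = flipSeq G σ (List.replicate s w) b) ↔
      BallCovers G σ s w := by
  have h := floodedBall_flipSeq_replicate (G := G) σ w s
  refine ⟨fun hfl u => or_iff_not_imp_left.2 fun hu => ?_, fun hcov => ?_⟩
  · rw [← h.apply_of_not_reachIn u hu, hfl u w, h.apply_self]
  · have hconst : ∀ u, flipSeq G σ (List.replicate s w) u = not^[s] (σ w) := fun u => by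
      by_cases hu : ReachIn G σ s w u
      · exact h.apply_of_reachIn u hu
      · rw [h.apply_of_not_reachIn u hu]
        exact (hcov u).resolve_left hu
    exact fun a b => (hconst a).trans (hconst b).symm

theorem ballCovers_succ_of_floodMove {x y w : V} {d : Bool} {t : ℕ}
    (H : BallCovers G (floodMove G σ x d) t w)
    (hball : ∀ u, ReachIn G (floodMove G σ x d) t w u → ReachIn G σ (t + 1) y u)
    (hx : ∀ u, monoLinked G σ x u → ReachIn G σ (t + 1) y u)
    (hcol : floodMove G σ x d w = !σ y) : BallCovers G σ (t + 1) y := by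
  intro u
  rcases H u with hu | hu
  · exact Or.inl (hball u hu)
  by_cases hxu : monoLinked G σ x u
  · exact Or.inl (hx u hxu)
  · right
    rw [← floodMove_apply_of_not_monoLinked (d := d) hxu, hu, hcol, Function.iterate_succ_apply]

/-- `q` is where a shortest route from `w` to `x` after the move leaves the component of `w`. -/
theorem exists_next_on_shortest_route {x w : V} {r : ℕ}
    (hxw : ¬ monoLinked G (floodMove G σ x (!σ x)) x w)
    (h : ReachIn G (floodMove G σ x (!σ x)) (r + 1) w x)
    (hmin : ¬ ReachIn G (floodMove G σ x (!σ x)) r w x) :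
    ∃ q, σ q = !σ w ∧ ReachIn G σ 1 q w ∧ ReachIn G σ (r + 1) q x := by
  obtain h | ⟨p, q, hwp, hpq, hqx⟩ := h.head_cases
  · exact absurd h hmin
  have hwp' : monoLinked G σ w p := monoLinked_of_monoLinked_floodMove hxw hwp
  have hσ'w : floodMove G σ x (!σ x) w = σ w :=
    floodMove_apply_of_not_monoLinked fun h => hxw h.floodMove
  have hσ'q : floodMove G σ x (!σ x) q = !σ w := by
    rw [← hσ'w, Bool.eq_not_iff]
    intro he
    exact hmin (monoLinked.trans_reachIn (hwp.tail ⟨hpq, by rw [← hwp.colour_eq, he]⟩) hqx)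
  have hxq : ¬ monoLinked G σ x q := by
    intro hxq
    have hpq' : σ p ≠ σ q := fun he =>
      hxw ((monoLinked.floodMove (hxq.tail ⟨hpq.symm, he.symm⟩)).trans hwp.symm)
    have hwx : (!σ w) = !σ x := hσ'q.symm.trans (floodMove_apply_of_monoLinked hxq)
    exact hpq' (by rw [← hwp'.colour_eq, ← hxq.colour_eq]; simpa using hwx)
  refine ⟨q, ?_, .cons (.refl q) hpq.symm (.of_monoLinked 0 hwp'.symm),
    (reachIn_succ_of_reachIn_floodMove hqx.symm).symm⟩
  rw [← floodMove_apply_of_not_monoLinked (d := !σ x) hxq, hσ'q]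

theorem exists_ballCovers_succ (hG : G.Connected) {x w : V} {t : ℕ}
    (H : BallCovers G (floodMove G σ x (!σ x)) t w) : ∃ y, BallCovers G σ (t + 1) y := by
  classical
  by_cases hxw : monoLinked G (floodMove G σ x (!σ x)) x w
  · refine ⟨x, ballCovers_succ_of_floodMove H
      (fun u hu => reachIn_succ_of_reachIn_floodMove (monoLinked.trans_reachIn hxw hu))
      (fun u hu => .of_monoLinked _ hu) ?_⟩
    rw [← hxw.colour_eq]
    exact floodMove_apply_of_monoLinked (.refl x)
  have hwx : ReachIn G (floodMove G σ x (!σ x)) (t + 1) w x :=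
    (reachIn_succ_or_forall_monoLinked hG H x).resolve_right fun h => hxw (h w)
  have hreach : ∃ a, ReachIn G (floodMove G σ x (!σ x)) a w x := ⟨t + 1, hwx⟩
  obtain ⟨r, hr⟩ : ∃ r, Nat.find hreach = r + 1 :=
    Nat.exists_eq_succ_of_ne_zero fun h0 => hxw (h0 ▸ Nat.find_spec hreach).symm
  have hmin : ∀ a, ReachIn G (floodMove G σ x (!σ x)) a w x → r + 1 ≤ a :=
    fun a ha => hr ▸ Nat.find_min' hreach ha
  obtain ⟨q, hσq, hqw, hqx⟩ :=
    exists_next_on_shortest_route hxw (hr ▸ Nat.find_spec hreach) fun h => by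
      have := hmin r h
      omega
  have hrt := hmin _ hwx
  refine ⟨q, ballCovers_succ_of_floodMove H (fun u hu => ?_)
    (fun u hu => (hqx.trans_monoLinked hu).mono hrt) ?_⟩
  · rcases hu.cases_of_floodMove with hu | ⟨a, b, hab, hwx', hxu⟩
    · exact (hqw.trans hu).mono (by omega)
    · have hra := hmin a hwx'
      exact (hqx.trans (reachIn_succ_of_reachIn_floodMove hxu)).mono (by omega)
  · rw [floodMove_apply_of_not_monoLinked fun h => hxw h.floodMove, hσq, Bool.not_not]

theorem exists_replicate_floods_of_floods (hG : G.Connected) :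
    ∀ (S : List V) (σ : V → Bool), (∀ a b, flipSeq G σ S a = flipSeq G σ S b) →
      ∃ w t, t ≤ S.length ∧
        ∀ a b, flipSeq G σ (List.replicate t w) a = flipSeq G σ (List.replicate t w) b
  | [], _, h => let ⟨w⟩ := hG.nonempty; ⟨w, 0, le_rfl, h⟩
  | x :: S, σ, h => by
    obtain ⟨w, t, ht, hw⟩ := exists_replicate_floods_of_floods hG S (floodMove G σ x (!σ x)) h
    obtain ⟨y, hy⟩ := exists_ballCovers_succ hG ((flipSeq_replicate_floods_iff _ w t).1 hw)
    exact ⟨y, t + 1, by simpa using ht, (flipSeq_replicate_floods_iff σ y (t + 1)).2 hy⟩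

theorem exists_floods [Finite V] (hG : G.Connected) (σ : V → Bool) :
    ∃ S : List V, ∀ a b, flipSeq G σ S a = flipSeq G σ S b := by
  obtain ⟨w⟩ := hG.nonempty
  have : Nonempty V := ⟨w⟩
  obtain ⟨u₀, hu₀⟩ := Finite.exists_max (G.dist w)
  refine ⟨List.replicate (G.dist w u₀) w, (flipSeq_replicate_floods_iff σ w _).2 fun u => ?_⟩
  obtain ⟨p, hp⟩ := hG.exists_walk_length_eq_dist w u
  exact Or.inl ((reachIn_of_walk p).mono (hp ▸ hu₀ u))

end SingleVertex

end Flood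

open Flood

theorem two_colour_single_vertex_optimal_general {V : Type*} [Fintype V]
    (G : SimpleGraph V) (hG : G.Connected) (ω : V → Bool) :
    ∃ S : List V,
      (∀ a b, flipSeq G ω S a = flipSeq G ω S b) ∧
      S.length = sInf {k | ∃ S' : List V, S'.length = k ∧
        ∀ a b, flipSeq G ω S' a = flipSeq G ω S' b} ∧
      ∃ w, ∀ v ∈ S, v = w := by
  obtain ⟨S₀, hS₀⟩ := exists_floods hG ω
  obtain ⟨S, hlen, hS⟩ := Nat.sInf_mem (s := {k | ∃ S' : List V, S'.length = k ∧
    ∀ a b, flipSeq G ω S' a = flipSeq G ω S' b}) ⟨S₀.length, S₀, rfl, hS₀⟩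
  obtain ⟨w, t, ht, hw⟩ := exists_replicate_floods_of_floods hG S ω hS
  refine ⟨List.replicate t w, hw, ?_, w, fun v hv => List.eq_of_mem_replicate hv⟩
  rw [List.length_replicate]
  exact le_antisymm (hlen ▸ ht) (Nat.sInf_le ⟨_, List.length_replicate .., hw⟩)

/-- in the two-colour flood game on a connected, properly coloured
graph there is an optimal (minimum-length) flooding sequence all of whose moves
are played at one and the same vertex. -/
theorem two_colour_single_vertex_optimal {V : Type*} [Fintype V]
    (G : SimpleGraph V) (hG : G.Connected) (ω : V → Bool)
    (hprop : ∀ a b, G.Adj a b → ω a ≠ ω b) :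
    ∃ S : List V,
      (∀ a b, flipSeq G ω S a = flipSeq G ω S b) ∧
      S.length = sInf {k | ∃ S' : List V, S'.length = k ∧
        ∀ a b, flipSeq G ω S' a = flipSeq G ω S' b} ∧
      ∃ w, ∀ v ∈ S, v = w :=
  two_colour_single_vertex_optimal_general G hG ω
end

section
/- Let P be a coloured path with end-vertices u and v. Then a sequence of flooding moves makes P monochromatic if and only if it links u and v; consequently the minimum number of moves to flood P equals m_{P,ω}(u,v), the minimum number of moves to link its two endpoints. -/
namespace Flood

variable {V C : Type*}

theorem colour_eq_of_monoLinked {G : SimpleGraph V} {ω : V → C} {u v : V}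
    (h : monoLinked G ω u v) : ω u = ω v := by
  induction h with
  | refl => rfl
  | tail _ hadj ih => exact ih.trans hadj.2

theorem monoLinked_of_reachable {G : SimpleGraph V} {ω : V → C} (hω : ∀ a b, ω a = ω b)
    {u v : V} (h : G.Reachable u v) : monoLinked G ω u v :=
  Relation.ReflTransGen.mono (fun a b hab => ⟨hab, hω a b⟩) u v
    ((SimpleGraph.reachable_iff_reflTransGen u v).mp h)

theorem colour_eq_of_monoLinked_pathGraph {n : ℕ} {ω : Fin n → C} {x y w : Fin n}
    (h : monoLinked (SimpleGraph.pathGraph n) ω x y) (hxw : x ≤ w) (hwy : w ≤ y) :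
    ω w = ω x := by
  induction h generalizing w with
  | refl => rw [le_antisymm hwy hxw]
  | @tail b c hxb hbc ih =>
    by_cases hwb : w ≤ b
    · exact ih hxw hwb
    have hc : c.val = b.val + 1 := by
      rcases SimpleGraph.pathGraph_adj.mp hbc.1 with h | h <;> simp only [Fin.le_def] at * <;> omega
    have hwc : w = c := Fin.ext (by simp only [Fin.le_def] at *; omega)
    subst hwc
    by_cases hxb' : x ≤ b
    · exact hbc.2.symm.trans (ih hxb' le_rfl)
    · rw [le_antisymm hxw (Fin.le_def.mpr (by simp only [Fin.le_def] at *; omega))]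

theorem const_iff_monoLinked_zero_last {n : ℕ} (ω : Fin (n + 1) → C) :
    (∀ a b, ω a = ω b) ↔ monoLinked (SimpleGraph.pathGraph (n + 1)) ω 0 (Fin.last n) := by
  refine ⟨fun hω => monoLinked_of_reachable hω (SimpleGraph.pathGraph_preconnected _ _ _),
    fun h a b => ?_⟩
  rw [colour_eq_of_monoLinked_pathGraph h (Fin.zero_le a) (Fin.le_last a),
    colour_eq_of_monoLinked_pathGraph h (Fin.zero_le b) (Fin.le_last b)]

theorem floodCost_eq_linkCost {G : SimpleGraph V} {ω : V → C} {u v : V}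
    (h : ∀ S, Floods G ω S ↔ Links G ω S u v) : floodCost G ω = linkCost G ω u v :=
  congrArg sInf (Set.ext fun _ => exists_congr fun S => and_congr_right' (h S))

end Flood

open Flood

/-- on a coloured path, a sequence of moves makes the path
monochromatic iff it links the two end-vertices; hence the flooding cost of the
path equals the cost of linking its endpoints. -/
theorem path_flood_iff_link_ends {C : Type*} (n : ℕ) (ω : Fin (n + 1) → C) :
    (∀ S : List (Fin (n + 1) × C),
      (∀ a b, floodSeq (SimpleGraph.pathGraph (n + 1)) ω S a =
          floodSeq (SimpleGraph.pathGraph (n + 1)) ω S b) ↔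
        monoLinked (SimpleGraph.pathGraph (n + 1))
          (floodSeq (SimpleGraph.pathGraph (n + 1)) ω S) 0 (Fin.last n)) ∧
    floodCost (SimpleGraph.pathGraph (n + 1)) ω =
      linkCost (SimpleGraph.pathGraph (n + 1)) ω 0 (Fin.last n) :=
  ⟨fun _ => const_iff_monoLinked_zero_last _,
    floodCost_eq_linkCost fun _ => const_iff_monoLinked_zero_last _⟩
end
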